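/- For every q ∈ L¹[0,1] the infimum λ₁(q) is a (finite) real number, and the map q ↦ λ₁(q) from L¹[0,1] to ℝ is continuous with respect to the norm ‖q‖₋ := sup{ ∫₀¹ q(x) z(x) dx : z a test function with ∫₀¹ (z² + (z')²) dx ≤ 1 }; that is, for each q ∈ L¹[0,1] and each ε > 0 there exists δ > 0 such that every q̃ ∈ L¹[0,1] with ‖q̃ − q‖₋ < δ satisfies |λ₁(q̃) − λ₁(q)| < ε. -/

import Mathlib

open MeasureTheory Set Real Filter

/-- A test function on `[0,1]`: `y` is absolutely continuous on `[0,1]` with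
derivative `g` belonging to `L²[0,1]`. -/
def IsTest (y g : ℝ → ℝ) : Prop :=
  (∀ x ∈ Icc (0:ℝ) 1, y x = y 0 + ∫ t in (0:ℝ)..x, g t) ∧
  IntegrableOn g (Icc (0:ℝ) 1) ∧
  IntegrableOn (fun x => (g x) ^ 2) (Icc (0:ℝ) 1)

/-- The set of Rayleigh quotients of test functions for the Sturm–Liouville problem
`-y'' + q y = λ y`, `y'(0) - k₀² y(0) = 0`, `y'(1) + k₁² y(1) = 0`. -/
def RayleighSet (k0 k1 : ℝ) (q : ℝ → ℝ) : Set ℝ :=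
  { r : ℝ | ∃ y g : ℝ → ℝ, IsTest y g ∧ (0 < ∫ x in (0:ℝ)..1, (y x) ^ 2) ∧
      r = ((∫ x in (0:ℝ)..1, ((g x) ^ 2 + q x * (y x) ^ 2))
            + k0 ^ 2 * (y 0) ^ 2 + k1 ^ 2 * (y 1) ^ 2) / (∫ x in (0:ℝ)..1, (y x) ^ 2) }

/-- The first eigenvalue `λ₁(q)` defined as the infimum of the Rayleigh quotient. -/
noncomputable def lam1 (k0 k1 : ℝ) (q : ℝ → ℝ) : ℝ :=
  sInf (RayleighSet k0 k1 q)

/-- The negative Sobolev norm `‖q‖₋ = sup { ∫₀¹ q z dx : ‖z‖_{W₂¹} ≤ 1 }`. -/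
noncomputable def normNeg (q : ℝ → ℝ) : ℝ :=
  sSup { r : ℝ | ∃ z h : ℝ → ℝ, IsTest z h ∧
    (∫ x in (0:ℝ)..1, ((z x) ^ 2 + (h x) ^ 2)) ≤ 1 ∧
    r = ∫ x in (0:ℝ)..1, q x * z x }

/-!
The Sobolev inequality `y(x)² ≤ (1 + 1/d) ‖y‖₂² + d ‖y'‖₂²` does all the work. First, it shows
that `y²` is a test function whose `W₂¹`-norm is at most `3 (‖y‖₂² + ‖y'‖₂²)`, so the potential
enters the quadratic form only through the pairing `∫ p y²`, which is at most
`‖p‖₋ · 3 (‖y‖₂² + ‖y'‖₂²)`. Second, with `d` small it makes the form coercive: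
`‖y'‖₂² ≤ 2 (R_q(y) + C) ‖y‖₂²` for the Rayleigh quotient `R_q`. Together these give
`|R_q'(y) - R_q(y)| ≤ 6 ‖q' - q‖₋ (R_q(y) + C + 1/2)` for every test function `y`, and a relative
perturbation of this kind moves the infimum by at most the same relative amount.
-/

lemma abs_ciInf_sub_ciInf_le {ι : Type*} [Nonempty ι] {f f' : ι → ℝ} {η M : ℝ} (hη₀ : 0 ≤ η)
    (hη₁ : η ≤ 1) (hM : ∀ i, 0 ≤ f i + M) (h : ∀ i, |f' i - f i| ≤ η * (f i + M)) :
    |(⨅ i, f' i) - ⨅ i, f i| ≤ η * ((⨅ i, f i) + M) := by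
  have hf : BddBelow (range f) := ⟨-M, forall_mem_range.2 fun i => by linarith [hM i]⟩
  have hlow : ∀ i, (1 - η) * (⨅ i, f i) - η * M ≤ f' i := fun i => by
    have := mul_le_mul_of_nonneg_left (ciInf_le hf i) (sub_nonneg.2 hη₁)
    linarith [(abs_le.1 (h i)).1]
  have hf' : BddBelow (range f') := ⟨_, forall_mem_range.2 hlow⟩
  have hup : ((⨅ i, f' i) - η * M) / (1 + η) ≤ ⨅ i, f i := le_ciInf fun i => by
    rw [div_le_iff₀ (by linarith)]
    linarith [ciInf_le hf' i, (abs_le.1 (h i)).2]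
  rw [div_le_iff₀ (by linarith)] at hup
  rw [abs_le]
  constructor <;> linarith [le_ciInf hlow]

lemma intervalIntegrable_of_integrableOn_Icc {f : ℝ → ℝ} (hf : IntegrableOn f (Icc (0:ℝ) 1)) :
    IntervalIntegrable f volume 0 1 :=
  (intervalIntegrable_iff_integrableOn_Icc_of_le zero_le_one).2 hf

lemma integral_sq_nonneg (f : ℝ → ℝ) : 0 ≤ ∫ x in (0:ℝ)..1, (f x) ^ 2 :=
  intervalIntegral.integral_nonneg zero_le_one fun _ _ => sq_nonneg _

lemma abs_integral_mul_le {p f : ℝ → ℝ} {M : ℝ} (hp : IntegrableOn p (Icc 0 1))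
    (hf : ∀ x ∈ Icc (0:ℝ) 1, |f x| ≤ M) :
    |∫ x in (0:ℝ)..1, p x * f x| ≤ (∫ x in (0:ℝ)..1, |p x|) * M := by
  rw [← intervalIntegral.integral_mul_const M (fun x => |p x|), ← Real.norm_eq_abs]
  refine intervalIntegral.norm_integral_le_of_norm_le zero_le_one (ae_of_all _ fun x hx => ?_)
    ((intervalIntegrable_of_integrableOn_Icc hp).abs.mul_const M)
  rw [norm_mul, Real.norm_eq_abs, Real.norm_eq_abs]
  exact mul_le_mul_of_nonneg_left (hf x (Ioc_subset_Icc_self hx)) (abs_nonneg _)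

namespace IsTest

variable {y g : ℝ → ℝ}

lemma intervalIntegrable (hT : IsTest y g) : IntervalIntegrable g volume 0 1 :=
  intervalIntegrable_of_integrableOn_Icc hT.2.1

lemma absolutelyContinuousOnInterval (hT : IsTest y g) :
    AbsolutelyContinuousOnInterval (fun x => y 0 + ∫ t in (0:ℝ)..x, g t) 0 1 :=
  ((LipschitzWith.const (y 0)).lipschitzOnWith.absolutelyContinuousOnInterval).fun_add
    (hT.intervalIntegrable.absolutelyContinuousOnInterval_intervalIntegral (by simp))

lemma continuousOn (hT : IsTest y g) : ContinuousOn y (Icc 0 1) := by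
  have h := hT.absolutelyContinuousOnInterval.continuousOn
  rw [uIcc_of_le zero_le_one] at h
  exact h.congr hT.1

lemma ae_hasDerivAt (hT : IsTest y g) :
    ∀ᵐ t, t ∈ Icc (0:ℝ) 1 → HasDerivAt (fun x => y 0 + ∫ s in (0:ℝ)..x, g s) (g t) t := by
  filter_upwards [hT.intervalIntegrable.ae_hasDerivAt_integral] with t ht ht01
  rw [← uIcc_of_le zero_le_one] at ht01
  exact (ht ht01 0 (by simp)).const_add _

lemma integrableOn_sq (hT : IsTest y g) : IntegrableOn (fun x => (y x) ^ 2) (Icc 0 1) :=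
  (hT.continuousOn.pow 2).integrableOn_Icc

lemma sq_eq_add_integral (hT : IsTest y g) {x : ℝ} (hx : x ∈ Icc (0:ℝ) 1) :
    (y x) ^ 2 = (y 0) ^ 2 + ∫ t in (0:ℝ)..x, 2 * y t * g t := by
  set Y := fun x => y 0 + ∫ t in (0:ℝ)..x, g t
  have hY : AbsolutelyContinuousOnInterval Y 0 x :=
    hT.absolutelyContinuousOnInterval.mono (by simp [uIcc_of_le hx.1, hx.2, Icc_subset_Icc])
  have hprod := hY.integral_deriv_mul_eq_sub hY
  have hint : ∫ t in (0:ℝ)..x, deriv Y t * Y t + Y t * deriv Y t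
      = ∫ t in (0:ℝ)..x, 2 * y t * g t := by
    refine intervalIntegral.integral_congr_ae ?_
    filter_upwards [hT.ae_hasDerivAt] with t ht htx
    have htI : t ∈ Icc (0:ℝ) 1 := by
      rw [uIoc_of_le hx.1] at htx
      exact ⟨htx.1.le, htx.2.trans hx.2⟩
    have hyt : Y t = y t := (hT.1 t htI).symm
    rw [(ht htI).deriv, hyt]
    ring
  rw [hint] at hprod
  have h0 : Y 0 = y 0 := by simp [Y]
  have hyx : Y x = y x := (hT.1 x hx).symm
  rw [hprod, h0, hyx]
  ring

lemma sq (hT : IsTest y g) : IsTest (fun x => (y x) ^ 2) (fun x => 2 * y x * g x) := by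
  have hg2 : IntegrableOn (fun x => (2 * y x * g x) ^ 2) (Icc 0 1) := by
    refine IntegrableOn.congr_fun
      ((hT.2.2.mul_continuousOn (hT.continuousOn.pow 2) isCompact_Icc).const_mul 4)
      (fun x _ => by simp only [Pi.pow_apply]; ring) measurableSet_Icc
  refine ⟨fun x hx => hT.sq_eq_add_integral hx, ?_, hg2⟩
  exact IntegrableOn.congr_fun ((hT.2.1.mul_continuousOn hT.continuousOn isCompact_Icc).const_mul 2)
    (fun x _ => by ring) measurableSet_Icc

lemma const_mul (hT : IsTest y g) (c : ℝ) : IsTest (fun x => c * y x) (fun x => c * g x) := by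
  refine ⟨fun x hx => ?_, hT.2.1.const_mul c, ?_⟩
  · simp only [hT.1 x hx, intervalIntegral.integral_const_mul]
    ring
  · exact IntegrableOn.congr_fun (hT.2.2.const_mul (c ^ 2)) (fun x _ => by ring) measurableSet_Icc

lemma sub_sq_eq_integral (hT : IsTest y g) {x t : ℝ} (hx : x ∈ Icc (0:ℝ) 1)
    (ht : t ∈ Icc (0:ℝ) 1) :
    (y x) ^ 2 - (y t) ^ 2 = ∫ s in t..x, 2 * y s * g s := by
  have hI := intervalIntegrable_of_integrableOn_Icc hT.sq.2.1
  have hsub : ∀ {u}, u ∈ Icc (0:ℝ) 1 → uIcc 0 u ⊆ uIcc 0 1 := fun hu => by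
    rw [uIcc_of_le hu.1, uIcc_of_le zero_le_one]; exact Icc_subset_Icc le_rfl hu.2
  rw [hT.sq_eq_add_integral hx, hT.sq_eq_add_integral ht, add_sub_add_left_eq_sub,
    intervalIntegral.integral_interval_sub_left (hI.mono_set (hsub hx)) (hI.mono_set (hsub ht))]

lemma sq_le (hT : IsTest y g) {d : ℝ} (hd : 0 < d) {x : ℝ} (hx : x ∈ Icc (0:ℝ) 1) :
    (y x) ^ 2 ≤ (1 + d⁻¹) * (∫ t in (0:ℝ)..1, (y t) ^ 2) + d * ∫ t in (0:ℝ)..1, (g t) ^ 2 := by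
  set A := ∫ t in (0:ℝ)..1, (y t) ^ 2
  set B := ∫ t in (0:ℝ)..1, (g t) ^ 2
  set φ := fun t => d⁻¹ * (y t) ^ 2 + d * (g t) ^ 2
  have hy := intervalIntegrable_of_integrableOn_Icc hT.integrableOn_sq
  have hg := intervalIntegrable_of_integrableOn_Icc hT.2.2
  have hφ : IntegrableOn φ (Ioc 0 1) :=
    IntegrableOn.mono_set ((hT.integrableOn_sq.const_mul _).add (hT.2.2.const_mul _))
      Ioc_subset_Icc_self
  have hφint : ∫ t in Ioc (0:ℝ) 1, φ t = d⁻¹ * A + d * B := by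
    rw [← intervalIntegral.integral_of_le zero_le_one, intervalIntegral.integral_add
      (hy.const_mul _) (hg.const_mul _), intervalIntegral.integral_const_mul,
      intervalIntegral.integral_const_mul]
  -- `|2 y y'| ≤ y² / d + d y'²` bounds the oscillation of `y²` on `[0,1]`
  have hosc : ∀ t ∈ Icc (0:ℝ) 1, (y x) ^ 2 ≤ (y t) ^ 2 + (d⁻¹ * A + d * B) := by
    intro t ht
    have h1 : ∫ s in t..x, 2 * y s * g s ≤ ∫ s in uIoc t x, |2 * y s * g s| :=
      (le_abs_self _).trans
        (intervalIntegral.norm_integral_le_integral_norm_uIoc (f := fun s => 2 * y s * g s))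
    have htx : uIoc t x ⊆ Ioc 0 1 := by
      rw [← uIoc_of_le zero_le_one, ← uIcc_of_le zero_le_one] at *
      exact uIoc_subset_uIoc_of_uIcc_subset_uIcc (uIcc_subset_uIcc ht hx)
    have h2 : ∫ s in uIoc t x, |2 * y s * g s| ≤ ∫ s in uIoc t x, φ s := by
      refine setIntegral_mono_on (IntegrableOn.mono_set hT.sq.2.1.abs
        (htx.trans Ioc_subset_Icc_self)) (hφ.mono_set htx) measurableSet_uIoc fun s _ => ?_
      have : 0 ≤ d⁻¹ * (|y s| - d * |g s|) ^ 2 := by positivity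
      simp only [φ, abs_mul, abs_two]
      field_simp at this ⊢
      nlinarith [sq_abs (y s), sq_abs (g s)]
    have h3 : ∫ s in uIoc t x, φ s ≤ ∫ s in Ioc (0:ℝ) 1, φ s :=
      setIntegral_mono_set hφ (ae_of_all _ fun s => by positivity) (ae_of_all _ htx)
    linarith [hT.sub_sq_eq_integral hx ht]
  have hint := intervalIntegral.integral_mono_on zero_le_one intervalIntegrable_const
    (hy.add intervalIntegrable_const) hosc
  rw [intervalIntegral.integral_const, intervalIntegral.integral_add hy intervalIntegrable_const,
    intervalIntegral.integral_const] at hint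
  simp only [sub_zero, one_smul] at hint
  linarith

end IsTest

lemma isTest_const (c : ℝ) : IsTest (fun _ => c) (fun _ => 0) :=
  ⟨fun x _ => by simp, integrableOn_zero, by simp⟩

lemma integral_sq_add_sq {z h : ℝ → ℝ} (hT : IsTest z h) :
    ∫ x in (0:ℝ)..1, ((z x) ^ 2 + (h x) ^ 2)
      = (∫ x in (0:ℝ)..1, (z x) ^ 2) + ∫ x in (0:ℝ)..1, (h x) ^ 2 :=
  intervalIntegral.integral_add (intervalIntegrable_of_integrableOn_Icc hT.integrableOn_sq)
    (intervalIntegrable_of_integrableOn_Icc hT.2.2)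

lemma integral_mul_le_normNeg {p z h : ℝ → ℝ} (hp : IntegrableOn p (Icc 0 1)) (hT : IsTest z h)
    (hzh : ∫ x in (0:ℝ)..1, ((z x) ^ 2 + (h x) ^ 2) ≤ 1) :
    ∫ x in (0:ℝ)..1, p x * z x ≤ normNeg p := by
  refine le_csSup ⟨(∫ x in (0:ℝ)..1, |p x|) * 2, ?_⟩ ⟨z, h, hT, hzh, rfl⟩
  rintro r ⟨w, w', hw, hww', rfl⟩
  refine (le_abs_self _).trans (abs_integral_mul_le hp fun x hx => ?_)
  have hsob := hw.sq_le one_pos hx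
  rw [integral_sq_add_sq hw] at hww'
  have := integral_sq_nonneg w
  have := integral_sq_nonneg w'
  nlinarith [sq_abs (w x), abs_nonneg (w x)]

lemma abs_integral_mul_le_normNeg {p z h : ℝ → ℝ} {N : ℝ} (hp : IntegrableOn p (Icc 0 1))
    (hT : IsTest z h) (hN : 0 < N) (hzh : ∫ x in (0:ℝ)..1, ((z x) ^ 2 + (h x) ^ 2) ≤ N ^ 2) :
    |∫ x in (0:ℝ)..1, p x * z x| ≤ normNeg p * N := by
  have hscaled : ∀ c : ℝ, c ^ 2 = (N⁻¹) ^ 2 → c * ∫ x in (0:ℝ)..1, p x * z x ≤ normNeg p := by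
    intro c hc
    have hle : ∫ x in (0:ℝ)..1, ((c * z x) ^ 2 + (c * h x) ^ 2) ≤ 1 := by
      have : ∀ x, (c * z x) ^ 2 + (c * h x) ^ 2 = c ^ 2 * ((z x) ^ 2 + (h x) ^ 2) :=
        fun x => by ring
      simp only [this, intervalIntegral.integral_const_mul, hc, inv_pow]
      rw [inv_mul_le_one₀ (by positivity)]
      exact hzh
    have := integral_mul_le_normNeg hp (hT.const_mul c) hle
    simpa only [mul_left_comm _ c, intervalIntegral.integral_const_mul] using this
  have h1 := hscaled N⁻¹ rfl
  have h2 := hscaled (-N⁻¹) (neg_sq _)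
  rw [inv_mul_le_iff₀ hN] at h1
  rw [neg_mul, neg_le, le_inv_mul_iff₀ hN] at h2
  rw [abs_le]
  constructor <;> linarith

lemma IsTest.abs_integral_mul_sq_le_normNeg {p y g : ℝ → ℝ} (hp : IntegrableOn p (Icc 0 1))
    (hT : IsTest y g) (hA : 0 < ∫ x in (0:ℝ)..1, (y x) ^ 2) :
    |∫ x in (0:ℝ)..1, p x * (y x) ^ 2|
      ≤ normNeg p * (3 * ((∫ x in (0:ℝ)..1, (y x) ^ 2) + ∫ x in (0:ℝ)..1, (g x) ^ 2)) := by
  set A := ∫ x in (0:ℝ)..1, (y x) ^ 2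
  set B := ∫ x in (0:ℝ)..1, (g x) ^ 2
  have hB := integral_sq_nonneg g
  refine abs_integral_mul_le_normNeg hp hT.sq (by positivity) ?_
  have hy := intervalIntegrable_of_integrableOn_Icc hT.integrableOn_sq
  have hg := intervalIntegrable_of_integrableOn_Icc hT.2.2
  calc ∫ x in (0:ℝ)..1, (((y x) ^ 2) ^ 2 + (2 * y x * g x) ^ 2)
      ≤ ∫ x in (0:ℝ)..1, (2 * A + B) * ((y x) ^ 2 + 4 * (g x) ^ 2) := by
        refine intervalIntegral.integral_mono_on zero_le_one
          (intervalIntegrable_of_integrableOn_Icc ?_) ((hy.add (hg.const_mul 4)).const_mul _)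
          fun x hx => ?_
        · exact hT.sq.integrableOn_sq.add hT.sq.2.2
        · have hsob := hT.sq_le one_pos hx
          norm_num at hsob
          nlinarith [mul_le_mul_of_nonneg_right hsob
            (by positivity : (0:ℝ) ≤ (y x) ^ 2 + 4 * (g x) ^ 2)]
    _ = (2 * A + B) * (A + 4 * B) := by
        rw [intervalIntegral.integral_const_mul, intervalIntegral.integral_add hy (hg.const_mul 4),
          intervalIntegral.integral_const_mul]
    _ ≤ (3 * (A + B)) ^ 2 := by nlinarith

noncomputable def quadForm (k0 k1 : ℝ) (q y g : ℝ → ℝ) : ℝ :=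
  (∫ x in (0:ℝ)..1, ((g x) ^ 2 + q x * (y x) ^ 2)) + k0 ^ 2 * (y 0) ^ 2 + k1 ^ 2 * (y 1) ^ 2

noncomputable def rayleigh (k0 k1 : ℝ) (q y g : ℝ → ℝ) : ℝ :=
  quadForm k0 k1 q y g / ∫ x in (0:ℝ)..1, (y x) ^ 2

def NontrivialTest : Type :=
  {p : (ℝ → ℝ) × (ℝ → ℝ) // IsTest p.1 p.2 ∧ 0 < ∫ x in (0:ℝ)..1, (p.1 x) ^ 2}

instance : Nonempty NontrivialTest := ⟨⟨(fun _ => 1, fun _ => 0), isTest_const 1, by simp⟩⟩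

lemma RayleighSet_eq_range (k0 k1 : ℝ) (q : ℝ → ℝ) :
    RayleighSet k0 k1 q = range fun p : NontrivialTest => rayleigh k0 k1 q p.1.1 p.1.2 := by
  ext r
  constructor
  · rintro ⟨y, g, hT, hA, rfl⟩
    exact ⟨⟨(y, g), hT, hA⟩, rfl⟩
  · rintro ⟨⟨⟨y, g⟩, hT, hA⟩, rfl⟩
    exact ⟨y, g, hT, hA, rfl⟩

lemma lam1_eq_iInf (k0 k1 : ℝ) (q : ℝ → ℝ) :
    lam1 k0 k1 q = ⨅ p : NontrivialTest, rayleigh k0 k1 q p.1.1 p.1.2 := by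
  rw [lam1, RayleighSet_eq_range]
  rfl

section Rayleigh

variable {k0 k1 : ℝ} {q q' y g : ℝ → ℝ}

lemma IsTest.integrableOn_mul_sq (hT : IsTest y g) (hq : IntegrableOn q (Icc 0 1)) :
    IntegrableOn (fun x => q x * (y x) ^ 2) (Icc 0 1) :=
  hq.mul_continuousOn (hT.continuousOn.pow 2) isCompact_Icc

lemma quadForm_eq (hq : IntegrableOn q (Icc 0 1)) (hT : IsTest y g) :
    quadForm k0 k1 q y g = (∫ x in (0:ℝ)..1, (g x) ^ 2) + (∫ x in (0:ℝ)..1, q x * (y x) ^ 2)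
      + k0 ^ 2 * (y 0) ^ 2 + k1 ^ 2 * (y 1) ^ 2 := by
  rw [quadForm, intervalIntegral.integral_add (intervalIntegrable_of_integrableOn_Icc hT.2.2)
    (intervalIntegrable_of_integrableOn_Icc (hT.integrableOn_mul_sq hq))]

lemma quadForm_sub_quadForm (hq : IntegrableOn q (Icc 0 1)) (hq' : IntegrableOn q' (Icc 0 1))
    (hT : IsTest y g) :
    quadForm k0 k1 q' y g - quadForm k0 k1 q y g = ∫ x in (0:ℝ)..1, (q' x - q x) * (y x) ^ 2 := by
  simp only [quadForm_eq hq hT, quadForm_eq hq' hT, sub_mul]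
  rw [intervalIntegral.integral_sub
    (intervalIntegrable_of_integrableOn_Icc (hT.integrableOn_mul_sq hq'))
    (intervalIntegrable_of_integrableOn_Icc (hT.integrableOn_mul_sq hq))]
  ring

/-- Coercivity: the potential is form-bounded by the kinetic term with relative bound `1/2`. -/
lemma exists_quadForm_ge (k0 k1 : ℝ) (hq : IntegrableOn q (Icc 0 1)) :
    ∃ C, ∀ y g, IsTest y g → (∫ x in (0:ℝ)..1, (g x) ^ 2) / 2 - C * ∫ x in (0:ℝ)..1, (y x) ^ 2
      ≤ quadForm k0 k1 q y g := by
  set Q := ∫ x in (0:ℝ)..1, |q x|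
  have hQ : 0 ≤ Q := intervalIntegral.integral_nonneg zero_le_one fun _ _ => abs_nonneg _
  set d := (2 * Q + 1)⁻¹
  have hd : 0 < d := by positivity
  have hdQ : Q * d ≤ 1 / 2 := by
    rw [← div_eq_mul_inv, div_le_iff₀ (by positivity)]
    linarith
  refine ⟨Q * (2 * Q + 2), fun y g hT => ?_⟩
  have hpot := abs_integral_mul_le hq fun x hx => (abs_of_nonneg (sq_nonneg (y x))).le.trans
    (hT.sq_le hd hx)
  rw [inv_inv] at hpot
  have := integral_sq_nonneg y
  have := integral_sq_nonneg g
  rw [quadForm_eq hq hT]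
  nlinarith [(abs_le.1 hpot).1, mul_le_mul_of_nonneg_right hdQ this,
    sq_nonneg (k0 * y 0), sq_nonneg (k1 * y 1)]

lemma neg_le_rayleigh {C : ℝ} (hA : 0 < ∫ x in (0:ℝ)..1, (y x) ^ 2)
    (hC : (∫ x in (0:ℝ)..1, (g x) ^ 2) / 2 - C * ∫ x in (0:ℝ)..1, (y x) ^ 2
      ≤ quadForm k0 k1 q y g) :
    -C ≤ rayleigh k0 k1 q y g := by
  rw [rayleigh, le_div_iff₀ hA]
  linarith [integral_sq_nonneg g]

lemma abs_rayleigh_sub_rayleigh_le {C δ : ℝ} (hq : IntegrableOn q (Icc 0 1))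
    (hq' : IntegrableOn q' (Icc 0 1)) (hT : IsTest y g) (hA : 0 < ∫ x in (0:ℝ)..1, (y x) ^ 2)
    (hC : (∫ x in (0:ℝ)..1, (g x) ^ 2) / 2 - C * ∫ x in (0:ℝ)..1, (y x) ^ 2
      ≤ quadForm k0 k1 q y g)
    (hδ : normNeg (fun x => q' x - q x) ≤ δ) :
    |rayleigh k0 k1 q' y g - rayleigh k0 k1 q y g|
      ≤ 6 * δ * (rayleigh k0 k1 q y g + (C + 1 / 2)) := by
  set A := ∫ x in (0:ℝ)..1, (y x) ^ 2
  set B := ∫ x in (0:ℝ)..1, (g x) ^ 2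
  have hB := integral_sq_nonneg g
  have hpair := hT.abs_integral_mul_sq_le_normNeg (p := fun x => q' x - q x) (hq'.sub hq) hA
  have hδ₀ : 0 ≤ δ :=
    hδ.trans' (nonneg_of_mul_nonneg_left ((abs_nonneg _).trans hpair) (by positivity))
  have hRA : rayleigh k0 k1 q y g * A = quadForm k0 k1 q y g := div_mul_cancel₀ _ hA.ne'
  have hdiff : rayleigh k0 k1 q' y g - rayleigh k0 k1 q y g
      = (∫ x in (0:ℝ)..1, (q' x - q x) * (y x) ^ 2) / A := by
    rw [rayleigh, rayleigh, div_sub_div_same, quadForm_sub_quadForm hq hq' hT]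
  rw [hdiff, abs_div, abs_of_pos hA, div_le_iff₀ hA]
  nlinarith [mul_le_mul_of_nonneg_right hδ (by positivity : (0:ℝ) ≤ 3 * (A + B))]

end Rayleigh

theorem stmt10_general (k0 k1 : ℝ) :
    ∀ q : ℝ → ℝ, IntegrableOn q (Icc (0:ℝ) 1) →
      ((RayleighSet k0 k1 q).Nonempty ∧ BddBelow (RayleighSet k0 k1 q)) ∧
      (∀ ε : ℝ, 0 < ε → ∃ δ : ℝ, 0 < δ ∧
        ∀ q' : ℝ → ℝ, IntegrableOn q' (Icc (0:ℝ) 1) →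
          normNeg (fun x => q' x - q x) < δ →
          |lam1 k0 k1 q' - lam1 k0 k1 q| < ε) := by
  intro q hq
  obtain ⟨C, hC⟩ := exists_quadForm_ge k0 k1 hq
  have hlow (p : NontrivialTest) : -C ≤ rayleigh k0 k1 q p.1.1 p.1.2 :=
    neg_le_rayleigh p.2.2 (hC _ _ p.2.1)
  refine ⟨⟨?_, ?_⟩, fun ε hε => ?_⟩
  · rw [RayleighSet_eq_range]
    exact range_nonempty _
  · rw [RayleighSet_eq_range]
    exact ⟨-C, forall_mem_range.2 hlow⟩
  set M := lam1 k0 k1 q + (C + 1 / 2) with hMdef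
  have hM : 0 ≤ M := by
    have := le_ciInf hlow
    rw [← lam1_eq_iInf] at this
    linarith
  set δ := min (1 / 6) (ε / (6 * (M + 1)))
  have hδ : 0 < δ := by positivity
  refine ⟨δ, hδ, fun q' hq' hclose => ?_⟩
  have hperturb := abs_ciInf_sub_ciInf_le
    (f := fun p : NontrivialTest => rayleigh k0 k1 q p.1.1 p.1.2)
    (f' := fun p : NontrivialTest => rayleigh k0 k1 q' p.1.1 p.1.2) (by positivity)
    (by linarith [min_le_left (1 / 6) (ε / (6 * (M + 1)))]) (fun p => by linarith [hlow p])
    fun p => abs_rayleigh_sub_rayleigh_le hq hq' p.2.1 p.2.2 (hC _ _ p.2.1) hclose.le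
  rw [← lam1_eq_iInf, ← lam1_eq_iInf, ← hMdef] at hperturb
  have hδε : 6 * δ * (M + 1) ≤ ε := by
    have := min_le_right (1 / 6) (ε / (6 * (M + 1)))
    rw [le_div_iff₀ (by positivity)] at this
    linarith
  linarith

theorem stmt10 (k0 k1 : ℝ) (hk0 : 0 ≤ k0) (hk01 : k0 ≤ k1) :
    ∀ q : ℝ → ℝ, IntegrableOn q (Icc (0:ℝ) 1) →
      ((RayleighSet k0 k1 q).Nonempty ∧ BddBelow (RayleighSet k0 k1 q)) ∧
      (∀ ε : ℝ, 0 < ε → ∃ δ : ℝ, 0 < δ ∧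
        ∀ q' : ℝ → ℝ, IntegrableOn q' (Icc (0:ℝ) 1) →
          normNeg (fun x => q' x - q x) < δ →
          |lam1 k0 k1 q' - lam1 k0 k1 q| < ε) :=
  stmt10_general k0 k1
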